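/- (The exceptional case ξ = ξ*) Let a ∈ ℝ_{>0}^{3+3n}. There exists at most one g ∈ ℝ_{>0}^3 with g_2 = ξ* and Θ(g,a) = 0; moreover, such a g can exist only if ω1·Ω6(ξ*) = ω3·Ω4(ξ*), and in that case g has the form g_1 = (ξ*)^{1−n}η, g_3 = (ξ*)^{−1}(Ω4(ξ*)/ω1 + (a_1 ξ*/ω1)η), where η is the unique positive root of the quadratic equation A(ξ*) + B(ξ*)η − C(ξ*)η² = 0. -/

import Mathlib

open Finset

namespace Phos

noncomputable section

/-- Standard basis vector of `ℝ^N`, with `1`-based index `j`. -/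
def e (N : ℕ) (j : ℕ) : Fin N → ℝ := fun m => if (m : ℕ) + 1 = j then 1 else 0

/-- Standard basis vector of `ℕ^N`, with `1`-based index `j`. -/
def eN (N : ℕ) (j : ℕ) : Fin N → ℕ := fun m => if (m : ℕ) + 1 = j then 1 else 0

/-- The stoichiometric matrix `S` of the `n`-site sequential distributive
phosphorylation network.  For each `i = 1,…,n` the six columns `6(i−1)+1,…,6(i−1)+6`
are `e_{1+3i}−e_1−e_{3i−1}`, `e_1+e_{3i−1}−e_{1+3i}`, `e_1+e_{2+3i}−e_{1+3i}`,
`e_{3+3i}−e_3−e_{2+3i}`, `e_3+e_{2+3i}−e_{3+3i}`, `e_3+e_{3i−1}−e_{3+3i}`. -/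
def Smat (n : ℕ) : Matrix (Fin (3*n+3)) (Fin (6*n)) ℝ :=
  Matrix.of fun m r =>
    (![e (3*n+3) (1+3*((r : ℕ)/6+1)) - e (3*n+3) 1 - e (3*n+3) (3*((r : ℕ)/6+1)-1),
       e (3*n+3) 1 + e (3*n+3) (3*((r : ℕ)/6+1)-1) - e (3*n+3) (1+3*((r : ℕ)/6+1)),
       e (3*n+3) 1 + e (3*n+3) (2+3*((r : ℕ)/6+1)) - e (3*n+3) (1+3*((r : ℕ)/6+1)),
       e (3*n+3) (3+3*((r : ℕ)/6+1)) - e (3*n+3) 3 - e (3*n+3) (2+3*((r : ℕ)/6+1)),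
       e (3*n+3) 3 + e (3*n+3) (2+3*((r : ℕ)/6+1)) - e (3*n+3) (3+3*((r : ℕ)/6+1)),
       e (3*n+3) 3 + e (3*n+3) (3*((r : ℕ)/6+1)-1) - e (3*n+3) (3+3*((r : ℕ)/6+1))])
      ⟨(r : ℕ) % 6, Nat.mod_lt _ (by norm_num)⟩ m

/-- The rate exponent matrix `Y`: for each `i = 1,…,n` the six columns
`6(i−1)+1,…,6(i−1)+6` are `e_1+e_{3i−1}`, `e_{1+3i}`, `e_{1+3i}`,
`e_3+e_{2+3i}`, `e_{3+3i}`, `e_{3+3i}`. -/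
def Ymat (n : ℕ) : Matrix (Fin (3*n+3)) (Fin (6*n)) ℕ :=
  Matrix.of fun m r =>
    (![eN (3*n+3) 1 + eN (3*n+3) (3*((r : ℕ)/6+1)-1),
       eN (3*n+3) (1+3*((r : ℕ)/6+1)),
       eN (3*n+3) (1+3*((r : ℕ)/6+1)),
       eN (3*n+3) 3 + eN (3*n+3) (2+3*((r : ℕ)/6+1)),
       eN (3*n+3) (3+3*((r : ℕ)/6+1)),
       eN (3*n+3) (3+3*((r : ℕ)/6+1))])
      ⟨(r : ℕ) % 6, Nat.mod_lt _ (by norm_num)⟩ m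

/-- The monomial map `Φ(x)_j = ∏ₘ xₘ^{Y_{mj}}`. -/
def Phi (n : ℕ) (x : Fin (3*n+3) → ℝ) : Fin (6*n) → ℝ :=
  fun r => ∏ m, x m ^ (Ymat n m r)

/-- The conservation matrix `Z` (rows `z1, z2, z3`). -/
def Zmat (n : ℕ) : Matrix (Fin 3) (Fin (3*n+3)) ℝ :=
  Matrix.of fun r j =>
    if (r : ℕ) = 0 then (if (j : ℕ) % 3 = 0 then 1 else 0)
    else if (r : ℕ) = 1 then
      (if (j : ℕ) % 3 = 1 then 1 else if (j : ℕ) = 0 ∨ (j : ℕ) = 2 then -1 else 0)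
    else (if (j : ℕ) % 3 = 2 then 1 else 0)

/-- The `6 × 3` block `E0`. -/
def E0 : Fin 6 → Fin 3 → ℝ :=
  ![![1,0,1], ![1,0,0], ![0,0,1], ![0,1,1], ![0,1,0], ![0,0,1]]

/-- The block diagonal matrix `E` with `n` copies of `E0`. -/
def Emat (n : ℕ) : Matrix (Fin (6*n)) (Fin (3*n)) ℝ :=
  Matrix.of fun r c =>
    if (r : ℕ) / 6 = (c : ℕ) / 3 then
      E0 ⟨(r : ℕ) % 6, Nat.mod_lt _ (by norm_num)⟩ ⟨(c : ℕ) % 3, Nat.mod_lt _ (by norm_num)⟩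
    else 0

/-- The matrix `L ∈ ℤ^{(3+3n)×3}`: row `1 = (1, n−1, −1)`, row `2 = (−1, −n, 0)`,
row `3 = (1, n−2, −1)`, and for `i = 1,…,n` rows `1+3i` and `3+3i` equal
`(0, i−2, −1)` while row `2+3i = (−1, i−n, 0)`. -/
def Lmat (n : ℕ) : Matrix (Fin (3*n+3)) (Fin 3) ℤ :=
  Matrix.of fun j c =>
    if (j : ℕ) = 0 then ![1, (n : ℤ) - 1, -1] c
    else if (j : ℕ) = 1 then ![-1, -(n : ℤ), 0] c
    else if (j : ℕ) = 2 then ![1, (n : ℤ) - 2, -1] c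
    else if (j : ℕ) % 3 = 1 then ![-1, (((j : ℕ) / 3 : ℕ) : ℤ) - (n : ℤ), 0] c
    else ![0, (((j : ℕ) / 3 : ℕ) : ℤ) - 2, -1] c

/-- `g^L ∈ ℝ_{>0}^{3+3n}`, `(g^L)_j = g₁^{L_{j1}} g₂^{L_{j2}} g₃^{L_{j3}}`. -/
def gL (n : ℕ) (g : Fin 3 → ℝ) : Fin (3*n+3) → ℝ :=
  fun j => ∏ c, g c ^ (Lmat n j c)

/-- The coset condition map `Θ(g,a) = Z diag(a) (g^L − 𝟙)`. -/
def Theta (n : ℕ) (g : Fin 3 → ℝ) (a : Fin (3*n+3) → ℝ) : Fin 3 → ℝ :=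
  (Zmat n).mulVec (fun j => a j * (gL n g j - 1))

/-- The rate constants `κ(a,λ)_j = (Eλ)_j / Φ(a)_j`. -/
def kappaOf (n : ℕ) (a : Fin (3*n+3) → ℝ) (lam : Fin (3*n) → ℝ) : Fin (6*n) → ℝ :=
  fun r => (Emat n).mulVec lam r / Phi n a r

/-- `x` is a (positive) steady state of `ẋ = S diag(κ) Φ(x)`. -/
def isSteady (n : ℕ) (κ : Fin (6*n) → ℝ) (x : Fin (3*n+3) → ℝ) : Prop :=
  (Smat n).mulVec (fun r => κ r * Phi n x r) = 0

/-- The `1`-based component `a_j` of a vector `a ∈ ℝ^{3+3n}`. -/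
def av (n : ℕ) (a : Fin (3*n+3) → ℝ) (j : ℕ) : ℝ :=
  if h : j - 1 < 3*n+3 then a ⟨j - 1, h⟩ else 0

/-- `ω1 = Σ_{k=0}^n a_{1+3k}`. -/
def om1 (n : ℕ) (a : Fin (3*n+3) → ℝ) : ℝ := ∑ k ∈ Finset.range (n+1), av n a (1+3*k)

/-- `ω2 = −a₁ − a₃ + Σ_{k=0}^n a_{2+3k}`. -/
def om2 (n : ℕ) (a : Fin (3*n+3) → ℝ) : ℝ :=
  -(av n a 1) - av n a 3 + ∑ k ∈ Finset.range (n+1), av n a (2+3*k)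

/-- `ω3 = Σ_{k=0}^n a_{3+3k}`. -/
def om3 (n : ℕ) (a : Fin (3*n+3) → ℝ) : ℝ := ∑ k ∈ Finset.range (n+1), av n a (3+3*k)

/-- `Ω2(ξ) = Σ_{k=0}^n a_{2+3k} ξ^k`. -/
def Om2 (n : ℕ) (a : Fin (3*n+3) → ℝ) (ξ : ℝ) : ℝ :=
  ∑ k ∈ Finset.range (n+1), av n a (2+3*k) * ξ ^ k

/-- `Ω4(ξ) = Σ_{k=1}^n a_{1+3k} ξ^{k−1}`. -/
def Om4 (n : ℕ) (a : Fin (3*n+3) → ℝ) (ξ : ℝ) : ℝ :=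
  ∑ k ∈ Finset.Icc 1 n, av n a (1+3*k) * ξ ^ (k-1)

/-- `Ω6(ξ) = Σ_{k=1}^n a_{3+3k} ξ^{k−1}`. -/
def Om6 (n : ℕ) (a : Fin (3*n+3) → ℝ) (ξ : ℝ) : ℝ :=
  ∑ k ∈ Finset.Icc 1 n, av n a (3+3*k) * ξ ^ (k-1)

/-- `Δ(ξ) = (a₁/ω1)ξ − a₃/ω3`. -/
def Dlt (n : ℕ) (a : Fin (3*n+3) → ℝ) (ξ : ℝ) : ℝ :=
  av n a 1 / om1 n a * ξ - av n a 3 / om3 n a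

/-- `ξ* = (ω1 a₃)/(a₁ ω3)`. -/
def xistar (n : ℕ) (a : Fin (3*n+3) → ℝ) : ℝ :=
  om1 n a * av n a 3 / (av n a 1 * om3 n a)

/-- `F1(ξ) = Ω6(ξ)/ω3 − Ω4(ξ)/ω1`. -/
def F1 (n : ℕ) (a : Fin (3*n+3) → ℝ) (ξ : ℝ) : ℝ :=
  Om6 n a ξ / om3 n a - Om4 n a ξ / om1 n a

/-- `F3(ξ) = (a₁ξ/ω1)(Ω6(ξ)/ω3) − (a₃/ω3)(Ω4(ξ)/ω1)`. -/
def F3 (n : ℕ) (a : Fin (3*n+3) → ℝ) (ξ : ℝ) : ℝ :=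
  av n a 1 * ξ / om1 n a * (Om6 n a ξ / om3 n a) - av n a 3 / om3 n a * (Om4 n a ξ / om1 n a)

/-- `A(ξ) = (Ω4(ξ)+Ω6(ξ))Ω2(ξ)`. -/
def Ap (n : ℕ) (a : Fin (3*n+3) → ℝ) (ξ : ℝ) : ℝ := (Om4 n a ξ + Om6 n a ξ) * Om2 n a ξ

/-- `B(ξ) = (a₁ξ + a₃)Ω2(ξ) − ω2 ξ (Ω4(ξ)+Ω6(ξ))`. -/
def Bp (n : ℕ) (a : Fin (3*n+3) → ℝ) (ξ : ℝ) : ℝ :=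
  (av n a 1 * ξ + av n a 3) * Om2 n a ξ - om2 n a * ξ * (Om4 n a ξ + Om6 n a ξ)

/-- `C(ξ) = ξ(a₁ξ + a₃)(ω1+ω2+ω3)`. -/
def Cp (n : ℕ) (a : Fin (3*n+3) → ℝ) (ξ : ℝ) : ℝ :=
  ξ * (av n a 1 * ξ + av n a 3) * (om1 n a + om2 n a + om3 n a)

/-- `P(ξ) = A(ξ)Δ(ξ)² + B(ξ)Δ(ξ)F1(ξ) − C(ξ)F1(ξ)²`. -/
def Pp (n : ℕ) (a : Fin (3*n+3) → ℝ) (ξ : ℝ) : ℝ :=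
  Ap n a ξ * (Dlt n a ξ)^2 + Bp n a ξ * Dlt n a ξ * F1 n a ξ - Cp n a ξ * (F1 n a ξ)^2

/-- `θ(ξ) = 2C(ξ)F1(ξ) − Δ(ξ)[B(ξ) + (B(ξ)² + 4A(ξ)C(ξ))^{1/2}]`. -/
def thetaFun (n : ℕ) (a : Fin (3*n+3) → ℝ) (ξ : ℝ) : ℝ :=
  2 * Cp n a ξ * F1 n a ξ -
    Dlt n a ξ * (Bp n a ξ + Real.sqrt ((Bp n a ξ)^2 + 4 * Ap n a ξ * Cp n a ξ))

/-- `g1(ξ) = ξ^{1−n} F1(ξ)/Δ(ξ)`. -/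
def g1f (n : ℕ) (a : Fin (3*n+3) → ℝ) (ξ : ℝ) : ℝ :=
  ξ ^ ((1 : ℤ) - (n : ℤ)) * F1 n a ξ / Dlt n a ξ

/-- `g3(ξ) = ξ^{−1} F3(ξ)/Δ(ξ)`. -/
def g3f (n : ℕ) (a : Fin (3*n+3) → ℝ) (ξ : ℝ) : ℝ :=
  ξ⁻¹ * F3 n a ξ / Dlt n a ξ

/-- The candidate second steady state `b = diag(g^L) a` built from a zero `ξ`
of the determining equation, with `g = (g1(ξ), ξ, g3(ξ))`. -/
def bOf (n : ℕ) (a : Fin (3*n+3) → ℝ) (ξ : ℝ) : Fin (3*n+3) → ℝ :=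
  fun j => gL n ![g1f n a ξ, ξ, g3f n a ξ] j * a j

end

end Phos

/-!
Write `x = g₂`, `z = g₃` and `η = g₁ x^{n-1}`. Clearing denominators, the three components of
`Θ(g,a) = 0` read
`a₁ η x + Ω4(x) = ω1 x z`,  `(a₁ x + a₃) η² + ω2 x η z = Ω2(x) z`,  `a₃ η + Ω6(x) = ω3 x z`.
Adding the first and third equations and substituting into the second eliminates `z` and gives
`A(x) + B(x) η − C(x) η² = 0` for every `x`. Since `A, C > 0`, the product of the two roots of this
quadratic is negative, so `η` is its unique positive root; `g₁` is then `x^{1-n} η` and `g₃` is read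
off the first equation. At `x = ξ*` one has `a₁ ω3 x = ω1 a₃`, so in `ω1` times the third equation
minus `ω3` times the first both `η` and `z` cancel, leaving `ω1 Ω6(ξ*) = ω3 Ω4(ξ*)`.
-/

namespace Phos

theorem sum_range_three_mul {M : Type*} [AddCommMonoid M] (m : ℕ) (f : ℕ → M) :
    ∑ j ∈ range (3 * m), f j = ∑ k ∈ range m, ∑ i ∈ range 3, f (3 * k + i) := by
  induction m with
  | zero => simp
  | succ m ih =>
    rw [show 3 * (m + 1) = 3 * m + 3 by ring, sum_range_add, ih, sum_range_succ _ m]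

theorem sum_mul_div_sub_one {ι K : Type*} [DivisionRing K] (s : Finset ι) (c u : ι → K) (t : K) :
    ∑ i ∈ s, c i * (u i / t - 1) = (∑ i ∈ s, c i * u i) / t - ∑ i ∈ s, c i := by
  rw [sum_div, ← sum_sub_distrib]
  exact sum_congr rfl fun i _ => by rw [mul_sub, mul_one, mul_div_assoc]

theorem eq_of_quadratic_eq_zero_of_pos {K : Type*} [Field K] [LinearOrder K] [IsStrictOrderedRing K]
    {A B C η η' : K} (hA : 0 < A) (hC : 0 < C) (hη : 0 < η) (hη' : 0 < η')
    (h : A + B * η - C * η ^ 2 = 0) (h' : A + B * η' - C * η' ^ 2 = 0) : η' = η := by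
  have hfactor : (η - η') * (B - C * (η + η')) = 0 := by linear_combination h - h'
  rcases mul_eq_zero.mp hfactor with hdiff | hB
  · linarith
  · -- two distinct roots would have product `-A / C < 0`
    nlinarith [mul_pos (mul_pos hC hη) hη']

-- `Zmat`, `Lmat` and `gL` with a 0-based natural-number index `j` (so `a j` is `av n a (j + 1)`).
def zRow (r : Fin 3) (j : ℕ) : ℝ :=
  if (r : ℕ) = 0 then (if j % 3 = 0 then 1 else 0)
  else if (r : ℕ) = 1 then
    (if j % 3 = 1 then 1 else if j = 0 ∨ j = 2 then -1 else 0)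
  else (if j % 3 = 2 then 1 else 0)

def lRow (n j : ℕ) (c : Fin 3) : ℤ :=
  if j = 0 then ![1, (n : ℤ) - 1, -1] c
  else if j = 1 then ![-1, -(n : ℤ), 0] c
  else if j = 2 then ![1, (n : ℤ) - 2, -1] c
  else if j % 3 = 1 then ![-1, ((j / 3 : ℕ) : ℤ) - (n : ℤ), 0] c
  else ![0, ((j / 3 : ℕ) : ℤ) - 2, -1] c

noncomputable def gLn (n : ℕ) (g : Fin 3 → ℝ) (j : ℕ) : ℝ := ∏ c, g c ^ lRow n j c

-- The paper's `η`: `g 0`, `g 1` are its `g₁`, `g₂`.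
noncomputable def etaOf (n : ℕ) (g : Fin 3 → ℝ) : ℝ := g 0 * g 1 ^ (n - 1)

theorem etaOf_pos {n : ℕ} {g : Fin 3 → ℝ} (hg : ∀ i, 0 < g i) : 0 < etaOf n g :=
  mul_pos (hg 0) (pow_pos (hg 1) _)

theorem eq_zpow_mul_etaOf {n : ℕ} {g : Fin 3 → ℝ} (hn : 1 ≤ n) (h1 : g 1 ≠ 0) :
    g 0 = g 1 ^ ((1 : ℤ) - n) * etaOf n g := by
  rw [etaOf, ← zpow_natCast, mul_left_comm, ← zpow_add₀ h1, Nat.cast_sub hn]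
  simp

theorem theta_apply_eq_sum_blocks (n : ℕ) (g : Fin 3 → ℝ) (a : Fin (3*n+3) → ℝ) (r : Fin 3) :
    Theta n g a r = ∑ k ∈ range (n + 1), ∑ i ∈ range 3,
      zRow r (3 * k + i) * (av n a (3 * k + i + 1) * (gLn n g (3 * k + i) - 1)) := by
  set f : ℕ → ℝ := fun j => zRow r j * (av n a (j + 1) * (gLn n g j - 1))
  rw [← sum_range_three_mul (n + 1) f, show 3 * (n + 1) = 3 * n + 3 by ring,
    ← Fin.sum_univ_eq_sum_range f, Theta, Matrix.mulVec, dotProduct]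
  refine sum_congr rfl fun j _ => ?_
  have hav : av n a (j + 1) = a j := by simp [av]
  simp only [f, hav]
  rfl

theorem sum_range_three_zRow_zero (k : ℕ) (f : ℕ → ℝ) :
    ∑ i ∈ range 3, zRow 0 (3 * k + i) * f i = f 0 := by
  simp [sum_range_succ, zRow]

theorem sum_range_three_zRow_two (k : ℕ) (f : ℕ → ℝ) :
    ∑ i ∈ range 3, zRow 2 (3 * k + i) * f i = f 2 := by
  simp [sum_range_succ, zRow]

theorem sum_range_three_zRow_one_succ (k : ℕ) (f : ℕ → ℝ) :
    ∑ i ∈ range 3, zRow 1 (3 * (k + 1) + i) * f i = f 1 := by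
  simp [sum_range_succ, zRow, show 3 * (k + 1) ≠ 0 by omega, show 3 * (k + 1) ≠ 2 by omega]

theorem sum_range_three_zRow_one_zero (f : ℕ → ℝ) :
    ∑ i ∈ range 3, zRow 1 i * f i = -f 0 + f 1 - f 2 := by
  simp [sum_range_succ, zRow, ← sub_eq_add_neg]

theorem theta_apply_zero_eq_sum (n : ℕ) (g : Fin 3 → ℝ) (a : Fin (3*n+3) → ℝ) :
    Theta n g a 0 = ∑ k ∈ range (n + 1), av n a (3 * k + 1) * (gLn n g (3 * k) - 1) := by
  rw [theta_apply_eq_sum_blocks]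
  exact sum_congr rfl fun k _ => sum_range_three_zRow_zero k _

theorem theta_apply_two_eq_sum (n : ℕ) (g : Fin 3 → ℝ) (a : Fin (3*n+3) → ℝ) :
    Theta n g a 2 = ∑ k ∈ range (n + 1), av n a (3 * k + 3) * (gLn n g (3 * k + 2) - 1) := by
  rw [theta_apply_eq_sum_blocks]
  exact sum_congr rfl fun k _ => sum_range_three_zRow_two k _

theorem theta_apply_one_eq_sum (n : ℕ) (g : Fin 3 → ℝ) (a : Fin (3*n+3) → ℝ) :
    Theta n g a 1 = ∑ k ∈ range (n + 1), av n a (3 * k + 2) * (gLn n g (3 * k + 1) - 1)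
      - av n a 1 * (gLn n g 0 - 1) - av n a 3 * (gLn n g 2 - 1) := by
  rw [theta_apply_eq_sum_blocks, sum_range_succ',
    sum_range_succ' (fun k => av n a (3 * k + 2) * _)]
  simp only [sum_range_three_zRow_one_succ, mul_zero, zero_add, sum_range_three_zRow_one_zero]
  ring

section

variable {n : ℕ} {g : Fin 3 → ℝ}

theorem lRow_three_mul_succ (k : ℕ) : lRow n (3 * (k + 1)) = ![0, (k : ℤ) - 1, -1] := by
  funext c
  rw [lRow, if_neg (by omega), if_neg (by omega), if_neg (by omega), if_neg (by omega),
    Nat.mul_div_cancel_left _ three_pos, show ((k + 1 : ℕ) : ℤ) - 2 = k - 1 by omega]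

theorem lRow_three_mul_succ_add_one (k : ℕ) :
    lRow n (3 * (k + 1) + 1) = ![-1, (k : ℤ) + 1 - n, 0] := by
  funext c
  rw [lRow, if_neg (by omega), if_neg (by omega), if_neg (by omega), if_pos (by omega),
    show (3 * (k + 1) + 1) / 3 = k + 1 by omega, Nat.cast_succ]

theorem lRow_three_mul_succ_add_two (k : ℕ) :
    lRow n (3 * (k + 1) + 2) = ![0, (k : ℤ) - 1, -1] := by
  funext c
  rw [lRow, if_neg (by omega), if_neg (by omega), if_neg (by omega), if_neg (by omega),
    show (3 * (k + 1) + 2) / 3 = k + 1 by omega, show ((k + 1 : ℕ) : ℤ) - 2 = k - 1 by omega]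

theorem gLn_eq (j : ℕ) : gLn n g j = g 0 ^ lRow n j 0 * g 1 ^ lRow n j 1 * g 2 ^ lRow n j 2 :=
  Fin.prod_univ_three _

theorem gLn_zero (hn : 1 ≤ n) : gLn n g 0 = etaOf n g / g 2 := by
  simp [gLn_eq, lRow, etaOf, ← Nat.cast_pred hn, div_eq_mul_inv]

theorem gLn_one (hn : 1 ≤ n) : gLn n g 1 = 1 / (etaOf n g * g 1) := by
  rw [etaOf, mul_assoc, ← pow_succ, Nat.sub_add_cancel hn]
  simp [gLn_eq, lRow, mul_comm]

theorem gLn_two (hn : 1 ≤ n) (h1 : g 1 ≠ 0) : gLn n g 2 = etaOf n g / (g 1 * g 2) := by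
  simp [gLn_eq, lRow, etaOf, show (n : ℤ) - 2 = ((n - 1 : ℕ) : ℤ) - 1 by omega, zpow_sub_one₀ h1,
    div_eq_mul_inv, mul_assoc, mul_comm]

theorem gLn_three_mul_succ (k : ℕ) (h1 : g 1 ≠ 0) :
    gLn n g (3 * (k + 1)) = g 1 ^ k / (g 1 * g 2) := by
  rw [gLn_eq, lRow_three_mul_succ]
  simp [zpow_sub_one₀ h1, div_eq_mul_inv, mul_assoc, mul_comm]

theorem gLn_three_mul_succ_add_one (k : ℕ) (hn : 1 ≤ n) (h1 : g 1 ≠ 0) :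
    gLn n g (3 * (k + 1) + 1) = g 1 ^ k / etaOf n g := by
  rw [gLn_eq, lRow_three_mul_succ_add_one, etaOf,
    show (k : ℤ) + 1 - n = k - (n - 1 : ℕ) by omega]
  simp [zpow_sub₀ h1, div_eq_mul_inv, mul_comm, mul_left_comm]

theorem gLn_three_mul_succ_add_two (k : ℕ) (h1 : g 1 ≠ 0) :
    gLn n g (3 * (k + 1) + 2) = g 1 ^ k / (g 1 * g 2) := by
  rw [gLn_eq, lRow_three_mul_succ_add_two]
  simp [zpow_sub_one₀ h1, div_eq_mul_inv, mul_assoc, mul_comm]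

variable {a : Fin (3*n+3) → ℝ}

theorem Om4_eq_sum_range (x : ℝ) :
    Om4 n a x = ∑ k ∈ range n, av n a (3 * (k + 1) + 1) * x ^ k := by
  rw [Om4, ← Ico_add_one_right_eq_Icc, sum_Ico_eq_sum_range]
  exact sum_congr (by simp) fun k _ => by rw [Nat.add_sub_cancel_left]; ring_nf

theorem Om6_eq_sum_range (x : ℝ) :
    Om6 n a x = ∑ k ∈ range n, av n a (3 * (k + 1) + 3) * x ^ k := by
  rw [Om6, ← Ico_add_one_right_eq_Icc, sum_Ico_eq_sum_range]
  exact sum_congr (by simp) fun k _ => by rw [Nat.add_sub_cancel_left]; ring_nf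

theorem Om2_eq_sum_range (x : ℝ) :
    Om2 n a x = av n a 2 + x * ∑ k ∈ range n, av n a (3 * (k + 1) + 2) * x ^ k := by
  rw [Om2, sum_range_succ', add_comm, mul_sum]
  congr 1
  · simp
  · exact sum_congr rfl fun k _ => by ring_nf

theorem om1_eq_sum_range : om1 n a = av n a 1 + ∑ k ∈ range n, av n a (3 * (k + 1) + 1) := by
  rw [om1, sum_range_succ', add_comm]
  congr 1
  exact sum_congr rfl fun k _ => by ring_nf

theorem om2_eq_sum_range :
    om2 n a = - av n a 1 - av n a 3 + (av n a 2 + ∑ k ∈ range n, av n a (3 * (k + 1) + 2)) := by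
  rw [om2, sum_range_succ', add_comm (∑ k ∈ range n, _)]
  congr 2
  exact sum_congr rfl fun k _ => by ring_nf

theorem om3_eq_sum_range : om3 n a = av n a 3 + ∑ k ∈ range n, av n a (3 * (k + 1) + 3) := by
  rw [om3, sum_range_succ', add_comm]
  congr 1
  exact sum_congr rfl fun k _ => by ring_nf

theorem theta_apply_zero (hn : 1 ≤ n) (h1 : g 1 ≠ 0) :
    Theta n g a 0 = (av n a 1 * etaOf n g * g 1 + Om4 n a (g 1)) / (g 1 * g 2) - om1 n a := by
  rw [theta_apply_zero_eq_sum, sum_range_succ']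
  simp only [gLn_three_mul_succ _ h1, mul_zero, zero_add, gLn_zero hn]
  rw [sum_mul_div_sub_one, Om4_eq_sum_range, om1_eq_sum_range]
  field_simp
  ring

theorem theta_apply_one (hn : 1 ≤ n) (h1 : g 1 ≠ 0) :
    Theta n g a 1 = Om2 n a (g 1) / (etaOf n g * g 1)
      - (av n a 1 * g 1 + av n a 3) * etaOf n g / (g 1 * g 2) - om2 n a := by
  rw [theta_apply_one_eq_sum, sum_range_succ']
  simp only [gLn_three_mul_succ_add_one _ hn h1, mul_zero, zero_add, gLn_zero hn, gLn_one hn,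
    gLn_two hn h1]
  rw [sum_mul_div_sub_one, Om2_eq_sum_range, om2_eq_sum_range]
  -- no `etaOf n g ≠ 0` is available here, so only `g 1 * (g 1)⁻¹ = 1` is used
  simp only [div_eq_mul_inv, mul_inv]
  linear_combination (-(∑ k ∈ range n, av n a (3 * (k + 1) + 2) * g 1 ^ k) * (etaOf n g)⁻¹
    + av n a 1 * etaOf n g * (g 2)⁻¹) * mul_inv_cancel₀ h1

theorem theta_apply_two (hn : 1 ≤ n) (h1 : g 1 ≠ 0) :
    Theta n g a 2 = (av n a 3 * etaOf n g + Om6 n a (g 1)) / (g 1 * g 2) - om3 n a := by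
  rw [theta_apply_two_eq_sum, sum_range_succ']
  simp only [gLn_three_mul_succ_add_two _ h1, mul_zero, zero_add, gLn_two hn h1]
  rw [sum_mul_div_sub_one, Om6_eq_sum_range, om3_eq_sum_range]
  field_simp
  ring

theorem coset_equations_of_theta_eq_zero (hn : 1 ≤ n) (hg : ∀ i, 0 < g i)
    (hΘ : Theta n g a = 0) :
    av n a 1 * etaOf n g * g 1 + Om4 n a (g 1) = om1 n a * g 1 * g 2 ∧
    (av n a 1 * g 1 + av n a 3) * etaOf n g ^ 2 + om2 n a * g 1 * etaOf n g * g 2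
      = Om2 n a (g 1) * g 2 ∧
    av n a 3 * etaOf n g + Om6 n a (g 1) = om3 n a * g 1 * g 2 := by
  have h1 := (hg 1).ne'
  have h2 := (hg 2).ne'
  have hη : etaOf n g ≠ 0 := (etaOf_pos hg).ne'
  have e0 := congrFun hΘ 0
  have e1 := congrFun hΘ 1
  have e2 := congrFun hΘ 2
  rw [Pi.zero_apply, theta_apply_zero hn h1, sub_eq_zero, div_eq_iff (mul_ne_zero h1 h2)] at e0
  rw [Pi.zero_apply, theta_apply_two hn h1, sub_eq_zero, div_eq_iff (mul_ne_zero h1 h2)] at e2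
  rw [Pi.zero_apply, theta_apply_one hn h1] at e1
  field_simp at e1
  exact ⟨by linear_combination e0, by linear_combination -e1, by linear_combination e2⟩

end

section Positivity

variable {n : ℕ} {a : Fin (3*n+3) → ℝ}

theorem av_pos (ha : ∀ j, 0 < a j) {j : ℕ} (h : j ≤ 3 * n + 3) : 0 < av n a j := by
  rw [av, dif_pos (by omega)]
  exact ha _

theorem om1_pos (ha : ∀ j, 0 < a j) : 0 < om1 n a :=
  sum_pos (fun k hk => av_pos ha (by have := mem_range.mp hk; omega)) ⟨0, by simp⟩

theorem om3_pos (ha : ∀ j, 0 < a j) : 0 < om3 n a :=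
  sum_pos (fun k hk => av_pos ha (by have := mem_range.mp hk; omega)) ⟨0, by simp⟩

theorem om1_add_om2_add_om3_pos (ha : ∀ j, 0 < a j) : 0 < om1 n a + om2 n a + om3 n a := by
  have h0 : 0 ∈ range (n + 1) := by simp
  have h1 : av n a 1 ≤ om1 n a :=
    single_le_sum (f := fun k => av n a (1 + 3 * k))
      (fun k hk => (av_pos ha (by have := mem_range.mp hk; omega)).le) h0
  have h3 : av n a 3 ≤ om3 n a :=
    single_le_sum (f := fun k => av n a (3 + 3 * k))
      (fun k hk => (av_pos ha (by have := mem_range.mp hk; omega)).le) h0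
  have h2 : 0 < ∑ k ∈ range (n + 1), av n a (2 + 3 * k) :=
    sum_pos (fun k hk => av_pos ha (by have := mem_range.mp hk; omega)) ⟨0, h0⟩
  rw [om2]
  linarith

theorem Om2_pos (ha : ∀ j, 0 < a j) {x : ℝ} (hx : 0 < x) : 0 < Om2 n a x :=
  sum_pos (fun k hk => mul_pos (av_pos ha (by have := mem_range.mp hk; omega)) (pow_pos hx _))
    ⟨0, by simp⟩

theorem Om4_pos (hn : 1 ≤ n) (ha : ∀ j, 0 < a j) {x : ℝ} (hx : 0 < x) : 0 < Om4 n a x :=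
  sum_pos (fun k hk => mul_pos (av_pos ha (by have := mem_Icc.mp hk; omega)) (pow_pos hx _))
    ⟨1, by simpa using hn⟩

theorem Om6_pos (hn : 1 ≤ n) (ha : ∀ j, 0 < a j) {x : ℝ} (hx : 0 < x) : 0 < Om6 n a x :=
  sum_pos (fun k hk => mul_pos (av_pos ha (by have := mem_Icc.mp hk; omega)) (pow_pos hx _))
    ⟨1, by simpa using hn⟩

theorem Ap_pos (hn : 1 ≤ n) (ha : ∀ j, 0 < a j) {x : ℝ} (hx : 0 < x) : 0 < Ap n a x :=
  mul_pos (add_pos (Om4_pos hn ha hx) (Om6_pos hn ha hx)) (Om2_pos ha hx)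

theorem Cp_pos (ha : ∀ j, 0 < a j) {x : ℝ} (hx : 0 < x) : 0 < Cp n a x := by
  have h1 := av_pos ha (n := n) (j := 1) (by omega)
  have h3 := av_pos ha (n := n) (j := 3) (by omega)
  exact mul_pos (mul_pos hx (by positivity)) (om1_add_om2_add_om3_pos ha)

theorem xistar_pos (ha : ∀ j, 0 < a j) : 0 < xistar n a :=
  div_pos (mul_pos (om1_pos ha) (av_pos ha (by omega)))
    (mul_pos (av_pos ha (by omega)) (om3_pos ha))

end Positivity

section Elimination

variable {n : ℕ} {a : Fin (3*n+3) → ℝ} {x z η : ℝ}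

theorem Ap_add_Bp_mul_sub_Cp_mul_sq_eq_zero
    (h1 : av n a 1 * η * x + Om4 n a x = om1 n a * x * z)
    (h2 : (av n a 1 * x + av n a 3) * η ^ 2 + om2 n a * x * η * z = Om2 n a x * z)
    (h3 : av n a 3 * η + Om6 n a x = om3 n a * x * z) :
    Ap n a x + Bp n a x * η - Cp n a x * η ^ 2 = 0 := by
  rw [Ap, Bp, Cp]
  linear_combination (Om2 n a x - om2 n a * x * η) * (h1 + h3) - (om1 n a + om3 n a) * x * h2

theorem eq_inv_mul_of_av_one_mul_add_Om4_eq (ha : ∀ j, 0 < a j) (hx : x ≠ 0)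
    (h1 : av n a 1 * η * x + Om4 n a x = om1 n a * x * z) :
    z = x⁻¹ * (Om4 n a x / om1 n a + av n a 1 * x / om1 n a * η) := by
  have := (om1_pos ha).ne'
  field_simp
  linear_combination -h1

theorem om1_mul_Om6_xistar_eq_om3_mul_Om4_xistar (ha : ∀ j, 0 < a j)
    (h1 : av n a 1 * η * xistar n a + Om4 n a (xistar n a) = om1 n a * xistar n a * z)
    (h3 : av n a 3 * η + Om6 n a (xistar n a) = om3 n a * xistar n a * z) :
    om1 n a * Om6 n a (xistar n a) = om3 n a * Om4 n a (xistar n a) := by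
  have hxistar : av n a 1 * om3 n a * xistar n a = om1 n a * av n a 3 := by
    have := (av_pos ha (n := n) (j := 1) (by omega)).ne'
    have := (om3_pos ha).ne'
    rw [xistar]
    field_simp
  linear_combination om1 n a * h3 - om3 n a * h1 + η * hxistar

end Elimination

theorem theta_eq_zero_parametrization {n : ℕ} {a : Fin (3*n+3) → ℝ} {g : Fin 3 → ℝ}
    (hn : 1 ≤ n) (ha : ∀ j, 0 < a j) (hg : ∀ i, 0 < g i) (hΘ : Theta n g a = 0) :
    ∃ η : ℝ, 0 < η ∧
      g 0 = g 1 ^ ((1 : ℤ) - n) * η ∧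
      g 2 = (g 1)⁻¹ * (Om4 n a (g 1) / om1 n a + av n a 1 * g 1 / om1 n a * η) ∧
      Ap n a (g 1) + Bp n a (g 1) * η - Cp n a (g 1) * η ^ 2 = 0 ∧
      ∀ η' : ℝ, 0 < η' → Ap n a (g 1) + Bp n a (g 1) * η' - Cp n a (g 1) * η' ^ 2 = 0 →
        η' = η := by
  obtain ⟨h1, h2, h3⟩ := coset_equations_of_theta_eq_zero hn hg hΘ
  have hquad := Ap_add_Bp_mul_sub_Cp_mul_sq_eq_zero h1 h2 h3
  refine ⟨etaOf n g, etaOf_pos hg, eq_zpow_mul_etaOf hn (hg 1).ne',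
    eq_inv_mul_of_av_one_mul_add_Om4_eq ha (hg 1).ne' h1, hquad, fun η' hη' hquad' => ?_⟩
  exact eq_of_quadratic_eq_zero_of_pos (Ap_pos hn ha (hg 1)) (Cp_pos ha (hg 1)) (etaOf_pos hg)
    hη' hquad hquad'

/-- (The exceptional case `ξ = ξ*`.) There is at most one
`g ∈ ℝ_{>0}³` with `g₂ = ξ*` and `Θ(g,a) = 0`; such a `g` can exist only if
`ω1·Ω6(ξ*) = ω3·Ω4(ξ*)`, and then `g₁ = (ξ*)^{1−n}η`,
`g₃ = (ξ*)⁻¹(Ω4(ξ*)/ω1 + (a₁ξ*/ω1)η)` for the unique positive root `η` of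
`A(ξ*) + B(ξ*)η − C(ξ*)η² = 0`. -/
theorem exceptional_case_xistar (n : ℕ) (hn : 2 ≤ n)
    (a : Fin (3*n+3) → ℝ) (ha : ∀ j, 0 < a j) :
    (∀ g g' : Fin 3 → ℝ,
      (∀ i, 0 < g i) → g 1 = xistar n a → Theta n g a = 0 →
      (∀ i, 0 < g' i) → g' 1 = xistar n a → Theta n g' a = 0 → g = g') ∧
    ((∃ g : Fin 3 → ℝ, (∀ i, 0 < g i) ∧ g 1 = xistar n a ∧ Theta n g a = 0) →
      om1 n a * Om6 n a (xistar n a) = om3 n a * Om4 n a (xistar n a)) ∧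
    (∀ g : Fin 3 → ℝ, (∀ i, 0 < g i) → g 1 = xistar n a → Theta n g a = 0 →
      ∃ η : ℝ, 0 < η ∧
        g 0 = (xistar n a) ^ ((1 : ℤ) - (n : ℤ)) * η ∧
        g 2 = (xistar n a)⁻¹ *
          (Om4 n a (xistar n a) / om1 n a + av n a 1 * xistar n a / om1 n a * η) ∧
        Ap n a (xistar n a) + Bp n a (xistar n a) * η
          - Cp n a (xistar n a) * η^2 = 0 ∧
        ∀ η' : ℝ, 0 < η' →
          Ap n a (xistar n a) + Bp n a (xistar n a) * η'
            - Cp n a (xistar n a) * η'^2 = 0 → η' = η) := by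
  have hn1 : 1 ≤ n := by omega
  refine ⟨fun g g' hg hg1 hΘ hg' hg1' hΘ' => ?_, fun ⟨g, hg, hg1, hΘ⟩ => ?_,
    fun g hg hg1 hΘ => hg1 ▸ theta_eq_zero_parametrization hn1 ha hg hΘ⟩
  · obtain ⟨η, -, h0, h2, -, huniq⟩ := theta_eq_zero_parametrization hn1 ha hg hΘ
    obtain ⟨η', hη', h0', h2', hquad', -⟩ := theta_eq_zero_parametrization hn1 ha hg' hΘ'
    have hg11 : g 1 = g' 1 := hg1.trans hg1'.symm
    obtain rfl := huniq η' hη' (hg11 ▸ hquad')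
    ext i
    fin_cases i
    · exact h0.trans (hg11 ▸ h0'.symm)
    · exact hg11
    · exact h2.trans (hg11 ▸ h2'.symm)
  · obtain ⟨h1, -, h3⟩ := coset_equations_of_theta_eq_zero hn1 hg hΘ
    rw [hg1] at h1 h3
    exact om1_mul_Om6_xistar_eq_om3_mul_Om4_xistar ha h1 h3

end Phos
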